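/- Let (Σ,P) be a Kelvin–Planck theory for which all Clausius–Duhem temperature scales on Σ are positive multiples of some fixed one, T. Then the reversible cyclic elements of (Σ,P) are precisely those (0,q) ∈ V(Σ) satisfying ∫_Σ (1/T) dq = 0; in particular every such (0,q) belongs to \hat{P}. Moreover, of those (0,q) ∈ V(Σ) satisfying ∫_Σ (1/T) dq < 0, either all are contained in \hat{P} or none are. -/

import Mathlib

open Set

noncomputable section

/-- Signed regular Borel measures on `X`, modeled via the Riesz representation
theorem as the weak-star dual of `C(X, ℝ)`. -/
abbrev Meas (X : Type*) [TopologicalSpace X] := WeakDual ℝ C(X, ℝ)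

/-- The ambient space containing `V(X) = M°(X) ⊕ M(X)`; membership in the
subspace `M°(X)` of the first component is expressed by `p.1 1 = 0`. -/
abbrev VSp (X : Type*) [TopologicalSpace X] := Meas X × Meas X

/-- The cone of nonnegative measures. -/
def PosMeas (X : Type*) [TopologicalSpace X] : Set (Meas X) :=
  {μ | ∀ f : C(X, ℝ), (∀ x, 0 ≤ f x) → 0 ≤ μ f}

variable {X : Type*} [TopologicalSpace X]

/-- The Dirac measure at a point, i.e. the evaluation functional. -/
def dirac (x : X) : Meas X :=
  (⟨⟨⟨fun f => f x, fun _ _ => rfl⟩, fun _ _ => rfl⟩,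
    continuous_eval_const x⟩ : C(X, ℝ) →L[ℝ] ℝ)

/-- The set of nonnegative multiples of members of `P`. -/
def coneOf (P : Set (VSp X)) : Set (VSp X) :=
  {x | ∃ c : ℝ, 0 ≤ c ∧ ∃ p ∈ P, x = c • p}

/-- `\hat P`, the weak-star closure of the cone generated by `P`. -/
def hatP (P : Set (VSp X)) : Set (VSp X) :=
  closure (coneOf P)

/-- A thermodynamical theory: processes have change of condition with total mass
zero (i.e. `P ⊆ V(X)`), and `\hat P` is convex. -/
def IsThermoTheory (P : Set (VSp X)) : Prop :=
  (∀ p ∈ P, p.1 (1 : C(X, ℝ)) = 0) ∧ Convex ℝ (hatP P)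

/-- A Kelvin–Planck theory: a thermodynamical theory with
`\hat P ∩ ({0} × M₊(X)) = {(0,0)}`. -/
def IsKelvinPlanck (P : Set (VSp X)) : Prop :=
  IsThermoTheory P ∧ hatP P ∩ (({0} : Set (Meas X)) ×ˢ PosMeas X) = {(0, 0)}

/-- A Clausius–Duhem pair `(η, T)` for the theory `P`: `η` and `T` are continuous,
`T` is strictly positive, and for every continuous `β` equal pointwise to `1/T`
(such a `β` exists, and is unique, by positivity of `T`), the Clausius–Duhem
inequality `∫ η d(Δm) ≥ ∫ (1/T) dq` holds for every process in `P`. -/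
def IsCDPair (P : Set (VSp X)) (η T : C(X, ℝ)) : Prop :=
  (∀ x, 0 < T x) ∧
    ∀ β : C(X, ℝ), (∀ x, β x = (T x)⁻¹) → ∀ p ∈ P, p.2 β ≤ p.1 η

/-- A Clausius–Duhem temperature scale. -/
def IsCDTemp (P : Set (VSp X)) (T : C(X, ℝ)) : Prop :=
  ∃ η : C(X, ℝ), IsCDPair P η T

/-- Two states are of the same hotness: both `(0, δ_a − δ_b)` and `(0, δ_b − δ_a)`
belong to `\hat P`. -/
def SameHotness (P : Set (VSp X)) (a b : X) : Prop :=
  ((0 : Meas X), dirac a - dirac b) ∈ hatP P ∧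
    ((0 : Meas X), dirac b - dirac a) ∈ hatP P

/-- The hotness level of a state. -/
def hotnessLevel (P : Set (VSp X)) (a : X) : Set X :=
  {b | SameHotness P a b}

/-- A subset of the state space that is a hotness level. -/
def IsHotnessLevel (P : Set (VSp X)) (h : Set X) : Prop :=
  ∃ a : X, h = hotnessLevel P a

/-- The (signed) measure `μ` is supported in the set `A`: `μ` annihilates every
continuous function vanishing on `A`. -/
def SuppIn (μ : Meas X) (A : Set X) : Prop :=
  ∀ f : C(X, ℝ), (∀ x ∈ A, f x = 0) → μ f = 0

/-- `\hat Q` contains a passive heat transfer from hotness level `h` to `h'`: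
an element `(0, μ − μ')` of `\hat Q` with `μ, μ'` nonnegative, `supp μ ⊆ h`,
`supp μ' ⊆ h'` and `μ(h) = μ'(h') > 0` (the common value being the total mass). -/
def IsPassiveHT (Q : Set (VSp X)) (h h' : Set X) : Prop :=
  ∃ μ μ' : Meas X, μ ∈ PosMeas X ∧ μ' ∈ PosMeas X ∧ SuppIn μ h ∧ SuppIn μ' h' ∧
    μ (1 : C(X, ℝ)) = μ' (1 : C(X, ℝ)) ∧ 0 < μ (1 : C(X, ℝ)) ∧
    ((0 : Meas X), μ - μ') ∈ hatP Q

/-- Hotness level `h'` is hotter than `h`: the levels are distinct and every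
thermodynamical theory whose closed process cone contains `P` together with a
passive heat transfer from `h` to `h'` fails to be a Kelvin–Planck theory. -/
def Hotter (P : Set (VSp X)) (h' h : Set X) : Prop :=
  h' ≠ h ∧ ∀ Pd : Set (VSp X), IsThermoTheory Pd → P ⊆ hatP Pd →
    IsPassiveHT Pd h h' → ¬ IsKelvinPlanck Pd

/-- State `a` is hotter than state `b`. -/
def HotterState (P : Set (VSp X)) (a b : X) : Prop :=
  Hotter P (hotnessLevel P a) (hotnessLevel P b)

/-- A Carnot element of the theory `P` operating between hotness levels `h'` and
`h`: a reversible cyclic element `(0, μ' − μ)` with `μ', μ` nonzero nonnegative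
measures supported in `h'`, `h` respectively. -/
def IsCarnotBetween (P : Set (VSp X)) (h' h : Set X) (p : VSp X) : Prop :=
  p ∈ hatP P ∧ -p ∈ hatP P ∧
    ∃ μ' μ : Meas X, μ' ∈ PosMeas X ∧ μ ∈ PosMeas X ∧ μ' ≠ 0 ∧ μ ≠ 0 ∧
      SuppIn μ' h' ∧ SuppIn μ h ∧ p = ((0 : Meas X), μ' - μ)

end

/-!
The weak-star continuous functionals on `V(X)` are the maps `(Δm, q) ↦ ∫ f dΔm + ∫ g dq` with
`f, g` continuous. If some `(0, q)` with `∫ β dq = 0` lay outside the closed convex cone `\hat P`,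
Hahn–Banach would give such a pair `(f, g)`, nonpositive on `P`, with `∫ g dq > 0`. For small
`ε > 0`, `1 / (β + ε g)` is then a Clausius–Duhem temperature scale, with entropy `η - ε f`, so by
uniqueness of the scale `g` is a multiple of `β` and `∫ g dq = 0`: a contradiction.

Conversely the Clausius–Duhem inequality gives `∫ β dq ≤ 0` for every cyclic element `(0, q)`, so a
reversible one has `∫ β dq = 0`. Finally, if `∫ β dq₁ < 0` and `(0, q₁) ∈ \hat P`, any `(0, q)`
with `∫ β dq < 0` is a positive multiple of `(0, q₁)` plus an element with `∫ β = 0`.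
-/

section

variable {X : Type*} [TopologicalSpace X]

theorem Meas.exists_eq_apply (L : Meas X →L[ℝ] ℝ) : ∃ f : C(X, ℝ), ∀ μ : Meas X, L μ = μ f := by
  obtain ⟨f, rfl⟩ := LinearMap.dualEmbedding_surjective (topDualPairing ℝ C(X, ℝ)) L
  exact ⟨f, fun _ => rfl⟩

theorem VSp.exists_eq_apply_add_apply (L : VSp X →L[ℝ] ℝ) :
    ∃ f g : C(X, ℝ), ∀ p : VSp X, L p = p.1 f + p.2 g := by
  obtain ⟨f, hf⟩ := Meas.exists_eq_apply (L.comp (.inl ℝ (Meas X) (Meas X)))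
  obtain ⟨g, hg⟩ := Meas.exists_eq_apply (L.comp (.inr ℝ (Meas X) (Meas X)))
  exact ⟨f, g, fun p => by rw [← L.comp_inl_add_comp_inr, ← hf, ← hg]⟩

section Cone

variable {P : Set (VSp X)}

theorem smul_mem_hatP {c : ℝ} (hc : 0 ≤ c) {x : VSp X} (hx : x ∈ hatP P) : c • x ∈ hatP P := by
  refine map_mem_closure (continuous_const_smul c) hx ?_
  rintro _ ⟨c', hc', p, hp, rfl⟩
  exact ⟨c * c', mul_nonneg hc hc', p, hp, smul_smul c c' p⟩

theorem add_mem_hatP (hconv : Convex ℝ (hatP P)) {x y : VSp X} (hx : x ∈ hatP P)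
    (hy : y ∈ hatP P) : x + y ∈ hatP P := by
  have hmid := hconv hx hy (by norm_num : (0 : ℝ) ≤ 1 / 2) (by norm_num : (0 : ℝ) ≤ 1 / 2)
    (by norm_num)
  convert smul_mem_hatP (by norm_num : (0 : ℝ) ≤ 2) hmid using 1
  module

theorem IsKelvinPlanck.zero_mem_hatP (hP : IsKelvinPlanck P) : (0 : VSp X) ∈ hatP P :=
  (hP.2.symm.subset rfl).1

theorem exists_separating_of_notMem_hatP (hconv : Convex ℝ (hatP P))
    (h0 : (0 : VSp X) ∈ hatP P) {x : VSp X} (hx : x ∉ hatP P) :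
    ∃ f g : C(X, ℝ), (∀ p ∈ P, p.1 f + p.2 g ≤ 0) ∧ 0 < x.1 f + x.2 g := by
  have : LocallyConvexSpace ℝ (Meas X) :=
    WeakBilin.locallyConvexSpace (B := topDualPairing ℝ C(X, ℝ))
  obtain ⟨L, u, hLlt, hLx⟩ := geometric_hahn_banach_closed_point hconv isClosed_closure hx
  obtain ⟨f, g, hL⟩ := VSp.exists_eq_apply_add_apply L
  have hu : 0 < u := by simpa using hLlt 0 h0
  have hL0 : ∀ p ∈ hatP P, L p ≤ 0 := by
    intro p hp
    by_contra! hpos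
    have := hLlt _ (smul_mem_hatP (div_pos hu hpos).le hp)
    rw [map_smul, smul_eq_mul, div_mul_cancel₀ u hpos.ne'] at this
    exact this.false
  refine ⟨f, g, fun p hp => ?_, ?_⟩
  · rw [← hL]
    exact hL0 p (subset_closure ⟨1, zero_le_one, p, hp, (one_smul ℝ p).symm⟩)
  · rw [← hL]
    linarith

end Cone

namespace IsCDPair

variable {P : Set (VSp X)} {η T β : C(X, ℝ)}

theorem le_of_mem_hatP (hpair : IsCDPair P η T) (hβ : ∀ x, β x = (T x)⁻¹) {p : VSp X}
    (hp : p ∈ hatP P) : p.2 β ≤ p.1 η := by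
  have hclosed : IsClosed {p : VSp X | p.2 β ≤ p.1 η} :=
    isClosed_le ((WeakBilin.eval_continuous _ β).comp continuous_snd)
      ((WeakBilin.eval_continuous _ η).comp continuous_fst)
  refine closure_minimal ?_ hclosed hp
  rintro _ ⟨c, hc, p', hp', rfl⟩
  exact mul_le_mul_of_nonneg_left (hpair.2 β hβ p' hp') hc

theorem apply_nonpos_of_cyclic (hpair : IsCDPair P η T) (hβ : ∀ x, β x = (T x)⁻¹) {q : Meas X}
    (hq : ((0 : Meas X), q) ∈ hatP P) : q β ≤ 0 :=
  hpair.le_of_mem_hatP hβ hq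

theorem perturb (hpair : IsCDPair P η T) (hβ : ∀ x, β x = (T x)⁻¹) {f g : C(X, ℝ)}
    (hfg : ∀ p ∈ P, p.1 f + p.2 g ≤ 0) {ε : ℝ} (hε : 0 ≤ ε) {T' : C(X, ℝ)}
    (hT' : ∀ x, T' x = (β x + ε * g x)⁻¹) (hpos : ∀ x, 0 < β x + ε * g x) :
    IsCDPair P (η - ε • f) T' := by
  refine ⟨fun x => hT' x ▸ inv_pos.2 (hpos x), fun β' hβ' p hp => ?_⟩
  have hβ'eq : β' = β + ε • g := by
    ext x
    simp [hβ' x, hT' x]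
  have hCD := hpair.2 β hβ p hp
  have hsep := mul_le_mul_of_nonneg_left (hfg p hp) hε
  simp only [hβ'eq, map_add, map_sub, map_smul, smul_eq_mul]
  linarith

end IsCDPair

theorem exists_pos_forall_add_mul_pos [CompactSpace X] {β : C(X, ℝ)} (hβ : ∀ x, 0 < β x)
    (g : C(X, ℝ)) : ∃ ε > 0, ∀ x, 0 < β x + ε * g x := by
  obtain ⟨m, hm, hmβ⟩ := isCompact_univ.exists_forall_le' β.continuous.continuousOn
    (fun x _ => hβ x)
  have hg : 0 < ‖g‖ + 1 := by positivity
  refine ⟨m / (‖g‖ + 1), div_pos hm hg, fun x => ?_⟩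
  have hgx : -‖g‖ ≤ g x := neg_le_of_abs_le (g.norm_coe_le_norm x)
  have hεnorm : m / (‖g‖ + 1) * ‖g‖ < m := by
    rw [div_mul_eq_mul_div, div_lt_iff₀ hg]
    nlinarith
  have hεgx : m / (‖g‖ + 1) * -‖g‖ ≤ m / (‖g‖ + 1) * g x :=
    mul_le_mul_of_nonneg_left hgx (div_pos hm hg).le
  linarith [hmβ x trivial]

theorem mem_hatP_of_apply_eq_zero [CompactSpace X] {P : Set (VSp X)} (hP : IsKelvinPlanck P)
    {η T β : C(X, ℝ)} (hpair : IsCDPair P η T) (hβ : ∀ x, β x = (T x)⁻¹)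
    (huniq : ∀ T' : C(X, ℝ), IsCDTemp P T' → ∃ α : ℝ, 0 < α ∧ T' = α • T)
    {q : Meas X} (hq : q β = 0) : ((0 : Meas X), q) ∈ hatP P := by
  by_contra hnot
  obtain ⟨f, g, hfg, hsep⟩ :=
    exists_separating_of_notMem_hatP hP.1.2 hP.zero_mem_hatP hnot
  obtain ⟨ε, hε, hpos⟩ :=
    exists_pos_forall_add_mul_pos (fun x => (hβ x).symm ▸ inv_pos.2 (hpair.1 x)) g
  let T' : C(X, ℝ) := ⟨fun x => (β x + ε * g x)⁻¹, by
    fun_prop (disch := exact fun x => (hpos x).ne')⟩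
  obtain ⟨α, hα, hT'⟩ :=
    huniq T' ⟨_, hpair.perturb hβ hfg hε.le (fun _ => rfl) hpos⟩
  have hg : g = ((α⁻¹ - 1) / ε) • β := by
    ext x
    have hx : (β x + ε * g x)⁻¹ = α * T x := DFunLike.congr_fun hT' x
    rw [← inv_inv (T x), ← hβ x, inv_eq_iff_eq_inv, mul_inv, inv_inv] at hx
    field_simp at hx
    simp only [ContinuousMap.smul_apply, smul_eq_mul]
    field_simp
    linear_combination hx
  have hqg : q g = 0 := by rw [hg, map_smul, hq, smul_zero]
  exact hsep.ne' (show (0 : Meas X) f + q g = 0 by rw [hqg, add_zero]; rfl)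

end

theorem reversible_cyclic_elements_characterization_general
    {X : Type*} [TopologicalSpace X] [CompactSpace X]
    (P : Set (VSp X)) (hP : IsKelvinPlanck P)
    (η T β : C(X, ℝ)) (hpair : IsCDPair P η T) (hβ : ∀ x, β x = (T x)⁻¹)
    (huniq : ∀ T' : C(X, ℝ), IsCDTemp P T' → ∃ α : ℝ, 0 < α ∧ T' = α • T) :
    (∀ q : Meas X,
      (((0 : Meas X), q) ∈ hatP P ∧ -(((0 : Meas X), q) : VSp X) ∈ hatP P) ↔
        q β = 0) ∧
    ((∃ q : Meas X, q β < 0 ∧ ((0 : Meas X), q) ∈ hatP P) →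
      ∀ q : Meas X, q β < 0 → ((0 : Meas X), q) ∈ hatP P) := by
  have hmem : ∀ q : Meas X, q β = 0 → ((0 : Meas X), q) ∈ hatP P :=
    fun q hq => mem_hatP_of_apply_eq_zero hP hpair hβ huniq hq
  have hneg : ∀ q : Meas X, -(((0 : Meas X), q) : VSp X) = ((0 : Meas X), -q) := by
    simp
  refine ⟨fun q => ⟨fun ⟨hq, hq'⟩ => ?_, fun hq => ⟨hmem q hq, ?_⟩⟩, ?_⟩
  · have h₁ := hpair.apply_nonpos_of_cyclic hβ hq
    have h₂ : -q β ≤ 0 := hpair.apply_nonpos_of_cyclic hβ (hneg q ▸ hq')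
    linarith
  · rw [hneg]
    exact hmem (-q) (neg_eq_zero.2 hq)
  · rintro ⟨q₁, hq₁, hq₁mem⟩ q hq
    set s := q β / q₁ β
    have hs : 0 < s := div_pos_of_neg_of_neg hq hq₁
    have hrest : (q - s • q₁) β = 0 :=
      show q β - s * q₁ β = 0 by rw [div_mul_cancel₀ _ hq₁.ne, sub_self]
    convert add_mem_hatP hP.1.2 (hmem _ hrest) (smul_mem_hatP hs.le hq₁mem) using 1
    simp

/-- **Corollary.** Let `(X, P)` be a Kelvin–Planck theory all of whose
Clausius–Duhem temperature scales are positive multiples of a fixed one, `T`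
(with entropy partner `η`, and `β = 1/T`).  Then the reversible cyclic elements of
`(X, P)` are precisely the `(0, q) ∈ V(X)` with `∫ (1/T) dq = 0` (in particular,
every such `(0, q)` lies in `\hat P`); and of the `(0, q)` with `∫ (1/T) dq < 0`,
either all belong to `\hat P` or none do. -/
theorem reversible_cyclic_elements_characterization
    {X : Type*} [TopologicalSpace X] [CompactSpace X] [T2Space X]
    (P : Set (VSp X)) (hP : IsKelvinPlanck P)
    (η T β : C(X, ℝ)) (hpair : IsCDPair P η T) (hβ : ∀ x, β x = (T x)⁻¹)
    (huniq : ∀ T' : C(X, ℝ), IsCDTemp P T' → ∃ α : ℝ, 0 < α ∧ T' = α • T) :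
    (∀ q : Meas X,
      (((0 : Meas X), q) ∈ hatP P ∧ -(((0 : Meas X), q) : VSp X) ∈ hatP P) ↔
        q β = 0) ∧
    ((∃ q : Meas X, q β < 0 ∧ ((0 : Meas X), q) ∈ hatP P) →
      ∀ q : Meas X, q β < 0 → ((0 : Meas X), q) ∈ hatP P) :=
  reversible_cyclic_elements_characterization_general P hP η T β hpair hβ huniq
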